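/- arXiv:1607.07081 — 7 statements merged into one kernel-verified Lean document; each statement's English description precedes it below -/
import Mathlib

section
/- Let a₁, a₂, b₁, b₂, c₁, c₂ ∈ ℂ satisfy the four equations: a₁²b₁ − a₁b₁² = 1; 2a₁b₁a₂ − b₁²a₂ + a₁²b₂ − 2a₁b₁b₂ = 0; b₁a₂² + 2a₁a₂b₂ − 2b₁a₂b₂ − a₁b₂² = 0; a₂²b₂ − a₂b₂² = 1. Define the following polynomials in ℂ[x, y, z, u, v, w]: d₁₅ = z + a₁v + a₂w; d₁₆ = −yz + (−a₁² + a₁b₁ + a₁c₁)v² + (−2a₁a₂ + b₁a₂ + c₁a₂ + a₁b₂ + a₁c₂)vw + a₂(−a₂ + b₂ + c₂)w² + c₁vz + c₂wz; d₁₇ = u³ + u²x + ux² + x³; d₂₅ = −y + b₁v + b₂w; d₂₆ = −yz + b₁c₁v² + (c₁b₂ + b₁c₂)vw + b₂c₂w² − (−a₁ + b₁ + c₁)vy − (−a₂ + b₂ + c₂)wy; d₃₅ = x − u. Then d₁₅·d₂₆ − d₁₆·d₂₅ − d₁₇·d₃₅ = u⁴ + v³ + w³ − x⁴ − y²z − yz²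 in ℂ[x, y, z, u, v, w]. -/
open MvPolynomial

theorem U12_v1_v3_matrix_factorization
    (a₁ a₂ b₁ b₂ c₁ c₂ : ℂ)
    (h1 : a₁ ^ 2 * b₁ - a₁ * b₁ ^ 2 = 1)
    (h2 : 2 * a₁ * b₁ * a₂ - b₁ ^ 2 * a₂ + a₁ ^ 2 * b₂ - 2 * a₁ * b₁ * b₂ = 0)
    (h3 : b₁ * a₂ ^ 2 + 2 * a₁ * a₂ * b₂ - 2 * b₁ * a₂ * b₂ - a₁ * b₂ ^ 2 = 0)
    (h4 : a₂ ^ 2 * b₂ - a₂ * b₂ ^ 2 = 1)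
    (x y z u v w : MvPolynomial (Fin 6) ℂ)
    (hx : x = X 0) (hy : y = X 1) (hz : z = X 2)
    (hu : u = X 3) (hv : v = X 4) (hw : w = X 5)
    (d₁₅ d₁₆ d₁₇ d₂₅ d₂₆ d₃₅ : MvPolynomial (Fin 6) ℂ)
    (hd₁₅ : d₁₅ = z + C a₁ * v + C a₂ * w)
    (hd₁₆ : d₁₆ = -(y * z) + C (-a₁ ^ 2 + a₁ * b₁ + a₁ * c₁) * v ^ 2
        + C (-2 * a₁ * a₂ + b₁ * a₂ + c₁ * a₂ + a₁ * b₂ + a₁ * c₂) * (v * w)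
        + C (a₂ * (-a₂ + b₂ + c₂)) * w ^ 2 + C c₁ * (v * z) + C c₂ * (w * z))
    (hd₁₇ : d₁₇ = u ^ 3 + u ^ 2 * x + u * x ^ 2 + x ^ 3)
    (hd₂₅ : d₂₅ = -y + C b₁ * v + C b₂ * w)
    (hd₂₆ : d₂₆ = -(y * z) + C (b₁ * c₁) * v ^ 2 + C (c₁ * b₂ + b₁ * c₂) * (v * w)
        + C (b₂ * c₂) * w ^ 2 - C (-a₁ + b₁ + c₁) * (v * y) - C (-a₂ + b₂ + c₂) * (w * y))
    (hd₃₅ : d₃₅ = x - u) :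
    d₁₅ * d₂₆ - d₁₆ * d₂₅ - d₁₇ * d₃₅
      = u ^ 4 + v ^ 3 + w ^ 3 - x ^ 4 - y ^ 2 * z - y * z ^ 2 := by
  
  subst hx hy hz hu hv hw hd₁₅ hd₁₆ hd₁₇ hd₂₅ hd₂₆ hd₃₅
  have H1 := congrArg (C : ℂ →+* MvPolynomial (Fin 6) ℂ) h1
  have H2 := congrArg (C : ℂ →+* MvPolynomial (Fin 6) ℂ) h2
  have H3 := congrArg (C : ℂ →+* MvPolynomial (Fin 6) ℂ) h3
  have H4 := congrArg (C : ℂ →+* MvPolynomial (Fin 6) ℂ) h4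
  simp only [map_sub, map_add, map_mul, map_pow, map_one, map_zero, map_ofNat,
    map_neg] at H1 H2 H3 H4
  have hC2 : (C (2:ℂ) : MvPolynomial (Fin 6) ℂ) = 2 := by
    rw [show (2:ℂ) = 1 + 1 from by norm_num, map_add, map_one]; ring
  simp only [map_neg, map_add, map_mul, map_sub, map_pow, hC2]
  linear_combination (X 4 : MvPolynomial (Fin 6) ℂ)^3 * H1 + (X 4)^2 * X 5 * H2
    + X 4 * (X 5)^2 * H3 + (X 5)^3 * H4
end

section
/- Let a₁, a₂, b₁, b₂, c₁, c₂ ∈ ℂ satisfy the four equations: a₁²b₁ − a₁b₁² = 1; 2a₁b₁a₂ − b₁²a₂ + a₁²b₂ − 2a₁b₁b₂ = 0; b₁a₂² + 2a₁a₂b₂ − 2b₁a₂b₂ − a₁b₂² = 1; a₂²b₂ − a₂b₂² = 0. Define the following polynomials in ℂ[x, y, z, u, v, w]: d₁₅ = z + a₁v + a₂w; d₁₆ = yz + (−a₁² + a₁b₁ + a₁c₁)v² + (−a₁a₂ + b₁a₂ + c₁a₂ + a₁(−a₂ + b₂ + c₂))vw + a₂(−a₂ + b₂ + c₂)w² + c₁vz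 + c₂wz; d₁₇ = u³ + u²x + ux² + x³; d₂₅ = y + b₁v + b₂w; d₂₆ = yz + b₁c₁v² + (c₁b₂ + b₁c₂)vw + b₂c₂w² + (−a₁ + b₁ + c₁)vy + (−a₂ + b₂ + c₂)wy; d₃₅ = x − u. Then d₁₅·d₂₆ − d₁₆·d₂₅ − d₁₇·d₃₅ = u⁴ + v³ + vw² − x⁴ − y²z + yz² in ℂ[x, y, z, u, v, w]. -/
open MvPolynomial

theorem U12_v2_v3_matrix_factorization
    (a₁ a₂ b₁ b₂ c₁ c₂ : ℂ)
    (h1 : a₁ ^ 2 * b₁ - a₁ * b₁ ^ 2 = 1)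
    (h2 : 2 * a₁ * b₁ * a₂ - b₁ ^ 2 * a₂ + a₁ ^ 2 * b₂ - 2 * a₁ * b₁ * b₂ = 0)
    (h3 : b₁ * a₂ ^ 2 + 2 * a₁ * a₂ * b₂ - 2 * b₁ * a₂ * b₂ - a₁ * b₂ ^ 2 = 1)
    (h4 : a₂ ^ 2 * b₂ - a₂ * b₂ ^ 2 = 0)
    (x y z u v w : MvPolynomial (Fin 6) ℂ)
    (hx : x = X 0) (hy : y = X 1) (hz : z = X 2)
    (hu : u = X 3) (hv : v = X 4) (hw : w = X 5)
    (d₁₅ d₁₆ d₁₇ d₂₅ d₂₆ d₃₅ : MvPolynomial (Fin 6) ℂ)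
    (hd₁₅ : d₁₅ = z + C a₁ * v + C a₂ * w)
    (hd₁₆ : d₁₆ = y * z + C (-a₁ ^ 2 + a₁ * b₁ + a₁ * c₁) * v ^ 2
        + C (-(a₁ * a₂) + b₁ * a₂ + c₁ * a₂ + a₁ * (-a₂ + b₂ + c₂)) * (v * w)
        + C (a₂ * (-a₂ + b₂ + c₂)) * w ^ 2 + C c₁ * (v * z) + C c₂ * (w * z))
    (hd₁₇ : d₁₇ = u ^ 3 + u ^ 2 * x + u * x ^ 2 + x ^ 3)
    (hd₂₅ : d₂₅ = y + C b₁ * v + C b₂ * w)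
    (hd₂₆ : d₂₆ = y * z + C (b₁ * c₁) * v ^ 2 + C (c₁ * b₂ + b₁ * c₂) * (v * w)
        + C (b₂ * c₂) * w ^ 2 + C (-a₁ + b₁ + c₁) * (v * y) + C (-a₂ + b₂ + c₂) * (w * y))
    (hd₃₅ : d₃₅ = x - u) :
    d₁₅ * d₂₆ - d₁₆ * d₂₅ - d₁₇ * d₃₅
      = u ^ 4 + v ^ 3 + v * w ^ 2 - x ^ 4 - y ^ 2 * z + y * z ^ 2 := by
  have H1 : (C (a₁ ^ 2 * b₁ - a₁ * b₁ ^ 2) : MvPolynomial (Fin 6) ℂ) = C 1 := by rw [h1]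
  have H2 : (C (2 * a₁ * b₁ * a₂ - b₁ ^ 2 * a₂ + a₁ ^ 2 * b₂ - 2 * a₁ * b₁ * b₂)
      : MvPolynomial (Fin 6) ℂ) = C 0 := by rw [h2]
  have H3 : (C (b₁ * a₂ ^ 2 + 2 * a₁ * a₂ * b₂ - 2 * b₁ * a₂ * b₂ - a₁ * b₂ ^ 2)
      : MvPolynomial (Fin 6) ℂ) = C 1 := by rw [h3]
  have H4 : (C (a₂ ^ 2 * b₂ - a₂ * b₂ ^ 2) : MvPolynomial (Fin 6) ℂ) = C 0 := by rw [h4]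
  simp only [map_sub, map_add, map_mul, map_pow, map_one, map_zero, map_ofNat] at H1 H2 H3 H4
  simp only [map_add, map_sub, map_neg, map_mul, map_pow] at hd₁₆ hd₂₆
  subst hd₁₅ hd₁₆ hd₁₇ hd₂₅ hd₂₆ hd₃₅
  linear_combination H1 * v ^ 3 + H2 * (v ^ 2 * w) + H3 * (v * w ^ 2) + H4 * w ^ 3
end

section
/- A tuple (a₁, a₂, b₁, b₂) ∈ ℂ⁴ satisfies the four equations a₁²b₁ − a₁b₁² = 1; 2a₁b₁a₂ − b₁²a₂ + a₁²b₂ − 2a₁b₁b₂ = 0; b₁a₂² + 2a₁a₂b₂ − 2b₁a₂b₂ − a₁b₂² = 1; a₂²b₂ − a₂b₂² = 0 if and only if one of the following three conditions holds: (1) a₂ = 0, 2b₁³ = 1, a₁ = 2b₁, and b₂² = −b₁²; (2) b₂ = 0, 2a₁³ = −1, b₁ = 2a₁, and a₂² = −a₁²; (3) a₂ = b₂, 2a₁³ = −1, b₁ = −a₁, and a₂² = −a₁². Consequently, the set of solutions (a₁, a₂, b₁, b₂) ∈ ℂ⁴ of this system has exactly 18 elements. -/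
noncomputable def rt (c ζ : ℂ) : Fin 3 → ℂ
  | ⟨0, _⟩ => c
  | ⟨1, _⟩ => c * ζ
  | ⟨2, _⟩ => c * ζ ^ 2

noncomputable def sg : Bool → ℂ := fun ε => if ε then Complex.I else -Complex.I

noncomputable def fsol (c ζ : ℂ) : Fin 3 × Fin 3 × Bool → ℂ × ℂ × ℂ × ℂ
  | (⟨0, _⟩, k, ε) => (-(2 * rt c ζ k), 0, -(rt c ζ k), sg ε * -(rt c ζ k))
  | (⟨1, _⟩, k, ε) => (rt c ζ k, sg ε * rt c ζ k, 2 * rt c ζ k, 0)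
  | (⟨2, _⟩, k, ε) => (rt c ζ k, sg ε * rt c ζ k, -(rt c ζ k), sg ε * rt c ζ k)

lemma hc0 {c : ℂ} (hc : c ^ 3 = -(1/2)) : c ≠ 0 := by
  intro h; rw [h] at hc; norm_num at hc

lemma hz0 {ζ : ℂ} (hz3 : ζ ^ 3 = 1) : ζ ≠ 0 := by
  intro h; rw [h] at hz3; norm_num at hz3

lemma hz1 {ζ : ℂ} (hzs : ζ ^ 2 + ζ + 1 = 0) : ζ ≠ 1 := by
  intro h; rw [h] at hzs; norm_num at hzs

lemma hz21 {ζ : ℂ} (hz3 : ζ ^ 3 = 1) (hzs : ζ ^ 2 + ζ + 1 = 0) : ζ ^ 2 ≠ 1 := by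
  intro h
  apply hz1 hzs
  calc ζ = ζ * ζ ^ 2 := by rw [h, mul_one]
  _ = 1 := by rw [← pow_succ']; exact hz3

lemma hzz2 {ζ : ℂ} (hz3 : ζ ^ 3 = 1) (hzs : ζ ^ 2 + ζ + 1 = 0) : ζ ≠ ζ ^ 2 := by
  intro h
  apply hz1 hzs
  have h2 : ζ * 1 = ζ * ζ := by linear_combination h
  exact (mul_left_cancel₀ (hz0 hz3) h2).symm

lemma hr0 {c ζ : ℂ} (hz3 : ζ ^ 3 = 1) (hc : c ^ 3 = -(1/2)) :
    ∀ k, rt c ζ k ≠ 0 := by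
  intro k
  fin_cases k <;> simp [rt, hc0 hc, hz0 hz3]

lemma hrt3 {c ζ : ℂ} (hz3 : ζ ^ 3 = 1) (hc : c ^ 3 = -(1/2)) :
    ∀ k, (rt c ζ k) ^ 3 = -(1/2) := by
  intro k
  fin_cases k <;> simp only [rt]
  · exact hc
  · linear_combination ζ^3*hc - (1/2)*hz3
  · linear_combination ζ^6*hc - (1/2)*(ζ^3+1)*hz3

lemma hs0 : ∀ ε, sg ε ≠ 0 := by intro ε; cases ε <;> simp [sg]

lemma hsg2 : ∀ ε, (sg ε) ^ 2 = -1 := by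
  intro ε
  cases ε <;> simp only [sg, if_true, if_false, Bool.false_eq_true, neg_sq] <;>
    exact Complex.I_sq

lemma hII : Complex.I ≠ -Complex.I := by
  intro h
  have h2 : (2:ℂ) * Complex.I = 0 := by linear_combination h
  simp [Complex.I_ne_zero] at h2

lemma sginj : Function.Injective sg := by
  intro ε δ h
  cases ε <;> cases δ <;> simp_all [sg]
  · exact (hII h.symm).elim
  · exact (hII h).elim

lemma rinj {c ζ : ℂ} (hz3 : ζ ^ 3 = 1) (hzs : ζ ^ 2 + ζ + 1 = 0)
    (hc : c ^ 3 = -(1/2)) : Function.Injective (rt c ζ) := by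
  have h01 : c ≠ c * ζ := fun h => hz1 hzs (mul_left_cancel₀ (hc0 hc) (by rw [← h, mul_one])).symm
  have h02 : c ≠ c * ζ ^ 2 := fun h => hz21 hz3 hzs (mul_left_cancel₀ (hc0 hc) (by rw [← h, mul_one])).symm
  have h12 : c * ζ ≠ c * ζ ^ 2 := fun h => hzz2 hz3 hzs (mul_left_cancel₀ (hc0 hc) h)
  intro k l h
  fin_cases k <;> fin_cases l <;> simp_all [rt]

lemma fsol_inj {c ζ : ℂ} (hz3 : ζ ^ 3 = 1) (hzs : ζ ^ 2 + ζ + 1 = 0)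
    (hc : c ^ 3 = -(1/2)) : Function.Injective (fsol c ζ) := by
  have hsr : ∀ ε k, sg ε * rt c ζ k ≠ 0 := fun ε k => mul_ne_zero (hs0 ε) (hr0 hz3 hc k)
  have hrn : ∀ k, -(rt c ζ k) ≠ 0 := fun k => neg_ne_zero.2 (hr0 hz3 hc k)
  rintro ⟨i, k, ε⟩ ⟨j, l, δ⟩ h
  fin_cases i <;> fin_cases j <;>
    simp only [fsol, Prod.mk.injEq] at h <;>
    obtain ⟨h1, h2, h3, h4⟩ := h
  · -- 0,0
    have hkl : k = l := rinj hz3 hzs hc (neg_injective h3)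
    subst hkl
    have hεδ : ε = δ := sginj (mul_right_cancel₀ (hrn k) h4)
    subst hεδ; rfl
  · exact absurd h2.symm (hsr δ l)
  · exact absurd h2.symm (hsr δ l)
  · exact absurd h2 (hsr ε k)
  · -- 1,1
    have hkl : k = l := rinj hz3 hzs hc h1
    subst hkl
    have hεδ : ε = δ := sginj (mul_right_cancel₀ (hr0 hz3 hc k) h2)
    subst hεδ; rfl
  · exact absurd h4.symm (hsr δ l)
  · exact absurd h2 (hsr ε k)
  · exact absurd h4 (hsr ε k)
  · -- 2,2
    have hkl : k = l := rinj hz3 hzs hc h1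
    subst hkl
    have hεδ : ε = δ := sginj (mul_right_cancel₀ (hr0 hz3 hc k) h2)
    subst hεδ; rfl

lemma cube_char (ζ c x : ℂ) (hz3 : ζ ^ 3 = 1) (hzs : ζ ^ 2 + ζ + 1 = 0)
    (hc : c ^ 3 = -(1/2)) : x ^ 3 = -(1/2) ↔ x = c ∨ x = c * ζ ∨ x = c * ζ ^ 2 := by
  constructor
  · intro hx
    have h : (x - c) * ((x - c * ζ) * (x - c * ζ ^ 2)) = 0 := by
      linear_combination hx - hc + (c^2*x - c*x^2)*hzs + (c^2*x - c^3)*hz3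
    rcases mul_eq_zero.1 h with h | h
    · exact Or.inl (sub_eq_zero.1 h)
    · rcases mul_eq_zero.1 h with h | h
      · exact Or.inr (Or.inl (sub_eq_zero.1 h))
      · exact Or.inr (Or.inr (sub_eq_zero.1 h))
  · rintro (rfl | rfl | rfl)
    · exact hc
    · linear_combination ζ^3*hc - (1/2)*hz3
    · linear_combination ζ^6*hc - (1/2)*(ζ^3+1)*hz3

lemma sq_char (x y : ℂ) : x ^ 2 = -y ^ 2 ↔ x = Complex.I * y ∨ x = -(Complex.I * y) := by
  constructor
  · intro hx
    have h : (x - Complex.I * y) * (x + Complex.I * y) = 0 := by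
      linear_combination hx - y^2*Complex.I_sq
    rcases mul_eq_zero.1 h with h | h
    · exact Or.inl (sub_eq_zero.1 h)
    · exact Or.inr (eq_neg_of_add_eq_zero_left h)
  · rintro (rfl | rfl) <;> linear_combination y^2*Complex.I_sq

theorem iff_part (a₁ a₂ b₁ b₂ : ℂ) :
      (a₁ ^ 2 * b₁ - a₁ * b₁ ^ 2 = 1 ∧
       2 * a₁ * b₁ * a₂ - b₁ ^ 2 * a₂ + a₁ ^ 2 * b₂ - 2 * a₁ * b₁ * b₂ = 0 ∧
       b₁ * a₂ ^ 2 + 2 * a₁ * a₂ * b₂ - 2 * b₁ * a₂ * b₂ - a₁ * b₂ ^ 2 = 1 ∧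
       a₂ ^ 2 * b₂ - a₂ * b₂ ^ 2 = 0)
      ↔ ((a₂ = 0 ∧ 2 * b₁ ^ 3 = 1 ∧ a₁ = 2 * b₁ ∧ b₂ ^ 2 = -b₁ ^ 2) ∨
         (b₂ = 0 ∧ 2 * a₁ ^ 3 = -1 ∧ b₁ = 2 * a₁ ∧ a₂ ^ 2 = -a₁ ^ 2) ∨
         (a₂ = b₂ ∧ 2 * a₁ ^ 3 = -1 ∧ b₁ = -a₁ ∧ a₂ ^ 2 = -a₁ ^ 2)) := by
  constructor
  · rintro ⟨e1, e2, e3, e4⟩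
    have h4 : a₂ * (b₂ * (a₂ - b₂)) = 0 := by linear_combination e4
    rcases mul_eq_zero.1 h4 with ha | h4'
    · -- a₂ = 0
      subst ha
      left
      have ha1 : a₁ ≠ 0 := by
        intro h; rw [h] at e3; simp at e3
      have hb2 : b₂ ≠ 0 := by
        intro h; rw [h] at e3; simp at e3
      have h2 : a₁ * (b₂ * (a₁ - 2 * b₁)) = 0 := by linear_combination e2
      have hab : a₁ = 2 * b₁ := by
        rcases mul_eq_zero.1 h2 with h | h
        · exact absurd h ha1
        · rcases mul_eq_zero.1 h with h | h
          · exact absurd h hb2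
          · exact sub_eq_zero.1 h
      subst hab
      have hcube : 2 * b₁ ^ 3 = 1 := by linear_combination e1
      have hb1 : b₁ ≠ 0 := by
        intro h; rw [h] at hcube; norm_num at hcube
      refine ⟨rfl, hcube, rfl, ?_⟩
      have hkey : 2 * b₁ * (b₂ ^ 2 + b₁ ^ 2) = 0 := by linear_combination -e3 + hcube
      have := mul_eq_zero.1 hkey
      rcases this with h | h
      · exact absurd h (by simpa using hb1)
      · linear_combination h
    · rcases mul_eq_zero.1 h4' with hb | hab
      · -- b₂ = 0
        subst hb
        right; left
        have hb1 : b₁ ≠ 0 := by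
          intro h; rw [h] at e3; simp at e3
        have ha2 : a₂ ≠ 0 := by
          intro h; rw [h] at e3; simp at e3
        have h2 : a₂ * (b₁ * (2 * a₁ - b₁)) = 0 := by linear_combination e2
        have hab : b₁ = 2 * a₁ := by
          rcases mul_eq_zero.1 h2 with h | h
          · exact absurd h ha2
          · rcases mul_eq_zero.1 h with h | h
            · exact absurd h hb1
            · linear_combination -h
        subst hab
        have hcube : 2 * a₁ ^ 3 = -1 := by linear_combination -e1
        have ha1 : a₁ ≠ 0 := by
          intro h; rw [h] at hcube; norm_num at hcube
        refine ⟨rfl, hcube, rfl, ?_⟩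
        have hkey : 2 * a₁ * (a₂ ^ 2 + a₁ ^ 2) = 0 := by linear_combination e3 + hcube
        rcases mul_eq_zero.1 hkey with h | h
        · exact absurd h (by simpa using ha1)
        · linear_combination h
      · -- a₂ = b₂
        have hab : a₂ = b₂ := sub_eq_zero.1 hab
        subst hab
        right; right
        have ha2 : a₂ ≠ 0 := by
          intro h; rw [h] at e3; simp at e3
        have hd : a₁ - b₁ ≠ 0 := by
          intro h
          rw [(sub_eq_zero.1 h).symm] at e3
          apply ha2
          have : (a₁ - a₁) * a₂ ^ 2 = 1 := by linear_combination e3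
          simp at this
        have h2 : a₂ * ((a₁ - b₁) * (a₁ + b₁)) = 0 := by linear_combination e2
        have hb : b₁ = -a₁ := by
          rcases mul_eq_zero.1 h2 with h | h
          · exact absurd h ha2
          · rcases mul_eq_zero.1 h with h | h
            · exact absurd h hd
            · exact eq_neg_of_add_eq_zero_right h
        subst hb
        have hcube : 2 * a₁ ^ 3 = -1 := by linear_combination -e1
        have ha1 : a₁ ≠ 0 := by
          intro h; rw [h] at hcube; norm_num at hcube
        refine ⟨rfl, hcube, rfl, ?_⟩
        have hkey : 2 * a₁ * (a₂ ^ 2 + a₁ ^ 2) = 0 := by linear_combination e3 + hcube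
        rcases mul_eq_zero.1 hkey with h | h
        · exact absurd h (by simpa using ha1)
        · linear_combination h
  · rintro (⟨rfl, h2, rfl, h4⟩ | ⟨rfl, h2, rfl, h4⟩ | ⟨rfl, h2, rfl, h4⟩)
    · exact ⟨by linear_combination h2, by ring, by linear_combination -2*b₁*h4 + h2, by ring⟩
    · exact ⟨by linear_combination -h2, by ring, by linear_combination 2*a₁*h4 - h2, by ring⟩
    · exact ⟨by linear_combination -h2, by ring, by linear_combination 2*a₁*h4 - h2, by ring⟩

lemma range_eq {c ζ : ℂ} (hz3 : ζ ^ 3 = 1) (hzs : ζ ^ 2 + ζ + 1 = 0)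
    (hc : c ^ 3 = -(1/2)) :
    {p : ℂ × ℂ × ℂ × ℂ |
      p.1 ^ 2 * p.2.2.1 - p.1 * p.2.2.1 ^ 2 = 1 ∧
      2 * p.1 * p.2.2.1 * p.2.1 - p.2.2.1 ^ 2 * p.2.1 + p.1 ^ 2 * p.2.2.2
        - 2 * p.1 * p.2.2.1 * p.2.2.2 = 0 ∧
      p.2.2.1 * p.2.1 ^ 2 + 2 * p.1 * p.2.1 * p.2.2.2 - 2 * p.2.2.1 * p.2.1 * p.2.2.2
        - p.1 * p.2.2.2 ^ 2 = 1 ∧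
      p.2.1 ^ 2 * p.2.2.2 - p.2.1 * p.2.2.2 ^ 2 = 0} = Set.range (fsol c ζ) := by
  ext ⟨x1, x2, x3, x4⟩
  simp only [Set.mem_setOf_eq, Set.mem_range]
  rw [iff_part x1 x2 x3 x4]
  constructor
  · rintro (⟨rfl, h2, rfl, h4⟩ | ⟨rfl, h2, rfl, h4⟩ | ⟨rfl, h2, rfl, h4⟩)
    · -- family 1: (2*x3, 0, x3, x4)
      have hb : (-x3) ^ 3 = -(1/2) := by linear_combination -(1/2)*h2
      obtain ⟨k, hk⟩ : ∃ k, rt c ζ k = -x3 := by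
        rcases (cube_char ζ c (-x3) hz3 hzs hc).1 hb with h | h | h
        exacts [⟨0, h.symm⟩, ⟨1, h.symm⟩, ⟨2, h.symm⟩]
      obtain ⟨ε, hε⟩ : ∃ ε, sg ε * x3 = x4 := by
        rcases (sq_char x4 x3).1 h4 with h | h
        · exact ⟨true, by simp only [sg, if_true]; exact h.symm⟩
        · exact ⟨false, by simp only [sg, Bool.false_eq_true, if_false]; linear_combination -h⟩
      refine ⟨(0, k, ε), ?_⟩
      simp only [fsol, hk]
      rw [show -(2 * -x3) = 2 * x3 by ring, neg_neg, hε]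
    · -- family 2: (x1, x2, 2*x1, 0)
      have hb : x1 ^ 3 = -(1/2) := by linear_combination (1/2)*h2
      obtain ⟨k, hk⟩ : ∃ k, rt c ζ k = x1 := by
        rcases (cube_char ζ c x1 hz3 hzs hc).1 hb with h | h | h
        exacts [⟨0, h.symm⟩, ⟨1, h.symm⟩, ⟨2, h.symm⟩]
      obtain ⟨ε, hε⟩ : ∃ ε, sg ε * x1 = x2 := by
        rcases (sq_char x2 x1).1 h4 with h | h
        · exact ⟨true, by simp only [sg, if_true]; exact h.symm⟩
        · exact ⟨false, by simp only [sg, Bool.false_eq_true, if_false]; linear_combination -h⟩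
      refine ⟨(1, k, ε), ?_⟩
      simp only [fsol, hk]
      rw [hε]
    · -- family 3: (x1, x2, -x1, x2)
      have hb : x1 ^ 3 = -(1/2) := by linear_combination (1/2)*h2
      obtain ⟨k, hk⟩ : ∃ k, rt c ζ k = x1 := by
        rcases (cube_char ζ c x1 hz3 hzs hc).1 hb with h | h | h
        exacts [⟨0, h.symm⟩, ⟨1, h.symm⟩, ⟨2, h.symm⟩]
      obtain ⟨ε, hε⟩ : ∃ ε, sg ε * x1 = x2 := by
        rcases (sq_char x2 x1).1 h4 with h | h
        · exact ⟨true, by simp only [sg, if_true]; exact h.symm⟩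
        · exact ⟨false, by simp only [sg, Bool.false_eq_true, if_false]; linear_combination -h⟩
      refine ⟨(2, k, ε), ?_⟩
      simp only [fsol, hk]
      rw [hε]
  · rintro ⟨⟨i, k, ε⟩, h⟩
    have h3 := hrt3 hz3 hc k
    have h2 := hsg2 ε
    fin_cases i <;> simp only [fsol, Prod.mk.injEq] at h <;>
      obtain ⟨rfl, rfl, rfl, rfl⟩ := h
    · exact Or.inl ⟨rfl, by linear_combination -2*h3, by ring,
        by linear_combination (rt c ζ k)^2*h2⟩
    · exact Or.inr (Or.inl ⟨rfl, by linear_combination 2*h3, rfl,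
        by linear_combination (rt c ζ k)^2*h2⟩)
    · exact Or.inr (Or.inr ⟨rfl, by linear_combination 2*h3, rfl,
        by linear_combination (rt c ζ k)^2*h2⟩)

theorem U12_v2_v3_parameter_solutions :
    (∀ a₁ a₂ b₁ b₂ : ℂ,
      (a₁ ^ 2 * b₁ - a₁ * b₁ ^ 2 = 1 ∧
       2 * a₁ * b₁ * a₂ - b₁ ^ 2 * a₂ + a₁ ^ 2 * b₂ - 2 * a₁ * b₁ * b₂ = 0 ∧
       b₁ * a₂ ^ 2 + 2 * a₁ * a₂ * b₂ - 2 * b₁ * a₂ * b₂ - a₁ * b₂ ^ 2 = 1 ∧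
       a₂ ^ 2 * b₂ - a₂ * b₂ ^ 2 = 0)
      ↔ ((a₂ = 0 ∧ 2 * b₁ ^ 3 = 1 ∧ a₁ = 2 * b₁ ∧ b₂ ^ 2 = -b₁ ^ 2) ∨
         (b₂ = 0 ∧ 2 * a₁ ^ 3 = -1 ∧ b₁ = 2 * a₁ ∧ a₂ ^ 2 = -a₁ ^ 2) ∨
         (a₂ = b₂ ∧ 2 * a₁ ^ 3 = -1 ∧ b₁ = -a₁ ∧ a₂ ^ 2 = -a₁ ^ 2)))
    ∧
    ({p : ℂ × ℂ × ℂ × ℂ |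
      p.1 ^ 2 * p.2.2.1 - p.1 * p.2.2.1 ^ 2 = 1 ∧
      2 * p.1 * p.2.2.1 * p.2.1 - p.2.2.1 ^ 2 * p.2.1 + p.1 ^ 2 * p.2.2.2
        - 2 * p.1 * p.2.2.1 * p.2.2.2 = 0 ∧
      p.2.2.1 * p.2.1 ^ 2 + 2 * p.1 * p.2.1 * p.2.2.2 - 2 * p.2.2.1 * p.2.1 * p.2.2.2
        - p.1 * p.2.2.2 ^ 2 = 1 ∧
      p.2.1 ^ 2 * p.2.2.2 - p.2.1 * p.2.2.2 ^ 2 = 0}).ncard = 18 := by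
  refine ⟨iff_part, ?_⟩
  obtain ⟨c, hc⟩ := IsAlgClosed.exists_pow_nat_eq (-(1/2) : ℂ) (n := 3) (by norm_num)
  have hζp := Complex.isPrimitiveRoot_exp 3 (by norm_num)
  set ζ := Complex.exp (2 * Real.pi * Complex.I / 3) with hζdef
  have hz3 : ζ ^ 3 = 1 := hζp.pow_eq_one
  have hz1' : ζ ≠ 1 := hζp.ne_one (by norm_num)
  have hzs : ζ ^ 2 + ζ + 1 = 0 := by
    have h : (ζ - 1) * (ζ ^ 2 + ζ + 1) = 0 := by linear_combination hz3
    rcases mul_eq_zero.1 h with h | h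
    · exact absurd (sub_eq_zero.1 h) hz1'
    · exact h
  rw [range_eq hz3 hzs hc, ← Set.image_univ,
    Set.ncard_image_of_injective _ (fsol_inj hz3 hzs hc), Set.ncard_univ]
  simp [Nat.card_eq_fintype_card]
end

section
/- Let ω ∈ ℂ be a primitive third root of unity and let ℚ(ω) denote the subfield of ℂ generated by ω over ℚ. If (a₁, b₁, a₂, b₂) ∈ ℂ⁴ satisfies the four equations a₁²b₁ − a₁b₁² = 1; 2a₁b₁a₂ − b₁²a₂ + a₁²b₂ − 2a₁b₁b₂ = 0; b₁a₂² + 2a₁a₂b₂ − 2b₁a₂b₂ − a₁b₂² = 0; a₂²b₂ − a₂b₂² = 1, then a₁, b₁, a₂, b₂ all lie in ℚ(ω). -/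
open IntermediateField

theorem U12_v1_v3_solutions_lie_in_Q_zeta3
    (ω : ℂ) (hω : IsPrimitiveRoot ω 3)
    (a₁ b₁ a₂ b₂ : ℂ)
    (h1 : a₁ ^ 2 * b₁ - a₁ * b₁ ^ 2 = 1)
    (h2 : 2 * a₁ * b₁ * a₂ - b₁ ^ 2 * a₂ + a₁ ^ 2 * b₂ - 2 * a₁ * b₁ * b₂ = 0)
    (h3 : b₁ * a₂ ^ 2 + 2 * a₁ * a₂ * b₂ - 2 * b₁ * a₂ * b₂ - a₁ * b₂ ^ 2 = 0)
    (h4 : a₂ ^ 2 * b₂ - a₂ * b₂ ^ 2 = 1) :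
    a₁ ∈ ℚ⟮ω⟯ ∧ b₁ ∈ ℚ⟮ω⟯ ∧ a₂ ∈ ℚ⟮ω⟯ ∧ b₂ ∈ ℚ⟮ω⟯ := by
  -- roots of unity facts about ω
  have hcube : ω ^ 3 = 1 := hω.pow_eq_one
  have hne1 : ω ≠ 1 := hω.ne_one (by norm_num)
  have hsum : ω ^ 2 + ω + 1 = 0 := by
    have h0 : (ω - 1) * (ω ^ 2 + ω + 1) = 0 := by linear_combination hcube
    exact (mul_eq_zero.mp h0).resolve_left (sub_ne_zero.mpr hne1)
  -- any cube root of unity lies in ℚ⟮ω⟯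
  have memcube : ∀ x : ℂ, x ^ 3 = 1 → x ∈ ℚ⟮ω⟯ := by
    intro x hx
    have hmem : ω ∈ ℚ⟮ω⟯ := mem_adjoin_simple_self ℚ ω
    have h0 : (x - 1) * (x - ω) * (x - ω ^ 2) = 0 := by
      linear_combination hx - x ^ 2 * hsum + x * hsum + x * hcube - hcube
    rcases mul_eq_zero.mp h0 with h0 | h0
    · rcases mul_eq_zero.mp h0 with h0 | h0
      · rw [sub_eq_zero.mp h0]; exact one_mem _
      · rw [sub_eq_zero.mp h0]; exact hmem
    · rw [sub_eq_zero.mp h0]; exact pow_mem hmem 2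
  -- nonvanishing facts
  have ha₁ : a₁ ≠ 0 := by rintro rfl; simp at h1
  have hb₁ : b₁ ≠ 0 := by rintro rfl; simp at h1
  have hab₁ : a₁ - b₁ ≠ 0 := by
    intro h
    have hb : b₁ = a₁ := (sub_eq_zero.mp h).symm
    rw [hb] at h1
    have : (0 : ℂ) = 1 := by linear_combination h1
    exact zero_ne_one this
  have ha₂ : a₂ ≠ 0 := by rintro rfl; simp at h4
  have hb₂ : b₂ ≠ 0 := by rintro rfl; simp at h4
  have hab₂ : a₂ - b₂ ≠ 0 := by
    intro h
    have hb : b₂ = a₂ := (sub_eq_zero.mp h).symm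
    rw [hb] at h4
    have : (0 : ℂ) = 1 := by linear_combination h4
    exact zero_ne_one this
  -- elimination: a₁² - a₁b₁ + b₁² = 0
  have E1 : a₁ ^ 2 - a₁ * b₁ + b₁ ^ 2 = 0 := by
    have key : (a₂ ^ 2 * (-3) * (a₁ * b₁ * (a₁ - b₁))) * (a₁ ^ 2 - a₁ * b₁ + b₁ ^ 2) = 0 := by
      linear_combination (a₁ ^ 2 - 2 * a₁ * b₁) ^ 2 * h3 -
        (2 * (a₁ - b₁) * a₂ * (a₁ ^ 2 - 2 * a₁ * b₁) + 2 * a₁ * (2 * a₁ * b₁ - b₁ ^ 2) * a₂ -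
          a₁ * (2 * a₁ * b₁ * a₂ - b₁ ^ 2 * a₂ + a₁ ^ 2 * b₂ - 2 * a₁ * b₁ * b₂)) * h2
    have hx : a₂ ^ 2 * (-3) * (a₁ * b₁ * (a₁ - b₁)) ≠ 0 := by
      apply mul_ne_zero
      apply mul_ne_zero
      · exact pow_ne_zero 2 ha₂
      · norm_num
      · exact mul_ne_zero (mul_ne_zero ha₁ hb₁) hab₁
    exact (mul_eq_zero.mp key).resolve_left hx
  -- elimination: a₂² - a₂b₂ + b₂² = 0
  have E2 : a₂ ^ 2 - a₂ * b₂ + b₂ ^ 2 = 0 := by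
    have key : (b₁ ^ 2 * (-3) * (a₂ * b₂ * (a₂ - b₂))) * (a₂ ^ 2 - a₂ * b₂ + b₂ ^ 2) = 0 := by
      linear_combination (b₂ ^ 2 - 2 * a₂ * b₂) ^ 2 * h2 -
        (2 * (a₂ - b₂) * (-b₁) * (b₂ ^ 2 - 2 * a₂ * b₂) +
          2 * (-b₂) * (2 * a₂ * b₂ - a₂ ^ 2) * (-b₁) -
          (-b₂) * (b₁ * a₂ ^ 2 + 2 * a₁ * a₂ * b₂ - 2 * b₁ * a₂ * b₂ - a₁ * b₂ ^ 2)) * h3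
    have hx : b₁ ^ 2 * (-3) * (a₂ * b₂ * (a₂ - b₂)) ≠ 0 := by
      apply mul_ne_zero
      apply mul_ne_zero
      · exact pow_ne_zero 2 hb₁
      · norm_num
      · exact mul_ne_zero (mul_ne_zero ha₂ hb₂) hab₂
    exact (mul_eq_zero.mp key).resolve_left hx
  -- cube values
  have ca₁ : a₁ ^ 3 = 1 := by linear_combination h1 + a₁ * E1
  have cb₁ : b₁ ^ 3 = -1 := by linear_combination b₁ * E1 - h1
  have ca₂ : a₂ ^ 3 = 1 := by linear_combination h4 + a₂ * E2
  have cb₂ : b₂ ^ 3 = -1 := by linear_combination b₂ * E2 - h4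
  refine ⟨memcube a₁ ca₁, ?_, memcube a₂ ca₂, ?_⟩
  · have h := memcube (-b₁) (by linear_combination -cb₁)
    simpa using neg_mem h
  · have h := memcube (-b₂) (by linear_combination -cb₂)
    simpa using neg_mem h
end

section
/- Let α ∈ ℂ satisfy α² = 1 + i. Then the subfield ℚ(α, √2) of ℂ equals the splitting field of X⁸ + 4 over ℚ inside ℂ. -/
open Polynomial IntermediateField

private lemma sq_cases (a b : ℂ) (h : a ^ 2 = b ^ 2) : a = b ∨ a = -b := by
  have h0 : (a - b) * (a + b) = 0 := by linear_combination h
  rcases mul_eq_zero.1 h0 with h1 | h1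
  · left; exact sub_eq_zero.1 h1
  · right; exact eq_neg_of_add_eq_zero_left h1

theorem adjoin_sqrt_one_add_I_sqrt_two_eq_splitting_field
    (α : ℂ) (hα : α ^ 2 = 1 + Complex.I) :
    IntermediateField.adjoin ℚ {α, ((Real.sqrt 2 : ℝ) : ℂ)}
      = IntermediateField.adjoin ℚ ((X ^ 8 + 4 : ℚ[X]).rootSet ℂ) := by
  set s : ℂ := ((Real.sqrt 2 : ℝ) : ℂ) with hs
  have hs2 : s ^ 2 = 2 := by
    rw [hs, ← Complex.ofReal_pow, Real.sq_sqrt (by norm_num : (2:ℝ) ≥ 0)]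
    norm_num
  have hsne : s ≠ 0 := by
    intro h; rw [h] at hs2; norm_num at hs2
  have hα4 : α ^ 4 = 2 * Complex.I := by
    have : α ^ 4 = (α ^ 2) ^ 2 := by ring
    rw [this, hα]; linear_combination Complex.I_sq
  have hα8 : α ^ 8 = -4 := by
    have : α ^ 8 = (α ^ 4) ^ 2 := by ring
    rw [this, hα4]; linear_combination 4 * Complex.I_sq
  have hαne : α ≠ 0 := by
    intro h; rw [h] at hα8; norm_num at hα8
  have hpne : (X ^ 8 + 4 : ℚ[X]) ≠ 0 := by
    intro h
    have := congrArg (fun p => p.coeff 8) h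
    simp [coeff_X_pow] at this
  have hmem : ∀ z : ℂ, z ^ 8 = -4 → z ∈ (X ^ 8 + 4 : ℚ[X]).rootSet ℂ := by
    intro z hz
    rw [mem_rootSet]
    refine ⟨hpne, ?_⟩
    simp only [map_add, map_pow, aeval_X, map_ofNat]
    rw [hz]; ring
  -- β = α^3 / s is another root
  have hβ : (α ^ 3 / s) ^ 8 = -4 := by
    have : (α ^ 3 / s) ^ 8 = (α ^ 8) ^ 3 / (s ^ 2) ^ 4 := by ring
    rw [this, hα8, hs2]; norm_num
  have hβne : α ^ 3 / s ≠ 0 := by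
    intro h; rw [h] at hβ; norm_num at hβ
  apply le_antisymm
  · rw [adjoin_le_iff]
    intro x hx
    rcases hx with rfl | hx
    · exact subset_adjoin ℚ _ (hmem _ hα8)
    · simp only [Set.mem_singleton_iff] at hx
      subst hx
      have hA : α ∈ adjoin ℚ ((X ^ 8 + 4 : ℚ[X]).rootSet ℂ) :=
        subset_adjoin ℚ _ (hmem _ hα8)
      have hB : α ^ 3 / s ∈ adjoin ℚ ((X ^ 8 + 4 : ℚ[X]).rootSet ℂ) :=
        subset_adjoin ℚ _ (hmem _ hβ)
      have : s = α ^ 3 / (α ^ 3 / s) := by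
        field_simp
      rw [this]
      exact div_mem (pow_mem hA 3) hB
  · rw [adjoin_le_iff]
    intro z hz
    rw [mem_rootSet] at hz
    have hz8 : z ^ 8 = -4 := by
      have := hz.2
      simp only [map_add, map_pow, aeval_X, map_ofNat] at this
      linear_combination this
    set K := adjoin ℚ ({α, s} : Set ℂ) with hK
    have hAK : α ∈ K := subset_adjoin ℚ _ (by simp)
    have hSK : s ∈ K := subset_adjoin ℚ _ (by simp)
    have hIK : Complex.I ∈ K := by
      have : Complex.I = α ^ 2 - 1 := by rw [hα]; ring
      rw [this]; exact sub_mem (pow_mem hAK 2) (one_mem K)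
    have hZK : α ^ 2 / s ∈ K := div_mem (pow_mem hAK 2) hSK
    -- u := z / α is an 8th root of unity
    set u : ℂ := z / α with hu
    have hu8 : u ^ 8 = 1 := by
      rw [hu, div_pow, hz8, hα8]; norm_num
    have hzK : u ∈ K → z ∈ K := by
      intro h
      have : z = α * u := by rw [hu]; field_simp
      rw [this]; exact mul_mem hAK h
    apply hzK
    have hζ2 : (α ^ 2 / s) ^ 2 = Complex.I := by
      rw [div_pow]
      have : (α ^ 2) ^ 2 = α ^ 4 := by ring
      rw [this, hα4, hs2]
      ring
    have h4 : (u ^ 4) ^ 2 = 1 ^ 2 := by rw [one_pow]; linear_combination hu8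
    rcases sq_cases _ _ h4 with h4 | h4
    · have h2 : (u ^ 2) ^ 2 = 1 ^ 2 := by rw [one_pow]; linear_combination h4
      rcases sq_cases _ _ h2 with h2 | h2
      · rcases sq_cases u 1 (by rw [one_pow]; exact h2) with h1 | h1
        · rw [h1]; exact one_mem K
        · rw [h1]; exact neg_mem (one_mem K)
      · have h2' : u ^ 2 = Complex.I ^ 2 := by
          rw [Complex.I_sq]; exact h2
        rcases sq_cases _ _ h2' with h1 | h1
        · rw [h1]; exact hIK
        · rw [h1]; exact neg_mem hIK
    · have h2 : (u ^ 2) ^ 2 = Complex.I ^ 2 := by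
        rw [Complex.I_sq]
        have : (u ^ 2) ^ 2 = u ^ 4 := by ring
        rw [this, h4]
      rcases sq_cases _ _ h2 with h2 | h2
      · have h2' : u ^ 2 = (α ^ 2 / s) ^ 2 := by rw [h2, hζ2]
        rcases sq_cases _ _ h2' with h1 | h1
        · rw [h1]; exact hZK
        · rw [h1]; exact neg_mem hZK
      · have h2' : u ^ 2 = (Complex.I * (α ^ 2 / s)) ^ 2 := by
          rw [mul_pow, hζ2, Complex.I_sq, h2]; ring
        rcases sq_cases _ _ h2' with h1 | h1
        · rw [h1]; exact mul_mem hIK hZK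
        · rw [h1]; exact neg_mem (mul_mem hIK hZK)
end

section
/- Let ζ₉ ∈ ℂ be a primitive ninth root of unity and let ℚ(ζ₉) ⊆ ℂ be the ninth cyclotomic field. Then the polynomial X¹⁸ + 4 is irreducible over ℚ(ζ₉). -/
/-!
By Capelli's theorem it suffices that `-4` is neither a square nor a cube in `ℚ(ζ₉)`. The prime
`19 ≡ 1 (mod 9)` splits completely in `ℤ[ζ₉]`: sending `ζ₉ ↦ 4`, a root of `Φ₉` modulo `19`,
defines a ring map `ℤ[ζ₉] → 𝔽₁₉`. Since `ℤ[ζ₉]` is integrally closed, any square or cube root of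
`-4` in `ℚ(ζ₉)` lies in it, and its image would be a square or cube root of `-4` in `𝔽₁₉`,
where there is none.
-/

open Polynomial IntermediateField

theorem IsPrimitiveRoot.isCyclotomicExtension_adjoin {L : Type*} [Field L] (K : Type*) [Field K]
    [Algebra K L] {n : ℕ} [NeZero n] {ζ : L} (hζ : IsPrimitiveRoot ζ n) :
    IsCyclotomicExtension {n} K K⟮ζ⟯ := by
  have := hζ.adjoin_isCyclotomicExtension K
  have hζ_int : IsIntegral K ζ := (hζ.isIntegral (NeZero.pos n)).tower_top
  exact IsCyclotomicExtension.equiv _ _ _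
    (Subalgebra.equivOfEq _ _ (adjoin_simple_toSubalgebra_of_isAlgebraic hζ_int.isAlgebraic).symm)

theorem IsPrimitiveRoot.exists_pow_eq_of_isRoot_cyclotomic {K : Type*} [Field K] [CharZero K]
    {n : ℕ} [NeZero n] [IsCyclotomicExtension {n} ℚ K] {ζ : K} (hζ : IsPrimitiveRoot ζ n)
    {R : Type*} [CommRing R] {m : R} (hm : (cyclotomic n R).IsRoot m)
    {e : ℕ} (he : e ≠ 0) {a : ℤ} {c : K} (hc : c ^ e = a) : ∃ x : R, x ^ e = a := by
  have hc_int : IsIntegral ℤ c :=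
    ⟨X ^ e - C a, monic_X_pow_sub_C a he, by rw [← aeval_def]; simp [hc]⟩
  obtain ⟨A, rfl⟩ : ∃ A : ℤ[X], aeval ζ A = c := by
    have := IsCyclotomicExtension.Rat.isIntegralClosure_adjoin_singleton hζ
    obtain ⟨y, rfl⟩ := IsIntegralClosure.isIntegral_iff (A := Algebra.adjoin ℤ {ζ}) |>.mp hc_int
    exact Algebra.adjoin_eq_exists_aeval ℤ ζ y
  obtain ⟨B, hB⟩ : cyclotomic n ℤ ∣ A ^ e - C a := by
    rw [cyclotomic_eq_minpoly hζ (NeZero.pos n)]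
    exact minpoly.isIntegrallyClosed_dvd (hζ.isIntegral (NeZero.pos n)) (by simp [hc])
  refine ⟨(A.map (Int.castRingHom R)).eval m, ?_⟩
  have hB_at_m := congrArg (fun P ↦ (P.map (Int.castRingHom R)).eval m) hB
  simp only [Polynomial.map_sub, Polynomial.map_pow, Polynomial.map_mul, map_cyclotomic,
    eval_sub, eval_pow, eval_mul, hm.eq_zero, zero_mul] at hB_at_m
  simpa [sub_eq_zero] using hB_at_m

-- The `2`-part of Capelli's theorem: a square root `y` of a root `x` of `X ^ m - a` would give
-- `(N y) ^ 2 = N x = a` for the norm `N` of `K⟮x⟯ / K`.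
theorem X_pow_two_mul_sub_C_irreducible_of_odd {K : Type*} [Field K] {m : ℕ} (hm : Odd m) {a : K}
    (hirr : Irreducible (X ^ m - C a)) (ha : ∀ b : K, b ^ 2 ≠ a) :
    Irreducible (X ^ (2 * m) - C a) := by
  refine X_pow_mul_sub_C_irreducible hirr fun E _ _ x hx ↦
    X_pow_sub_C_irreducible_of_prime Nat.prime_two fun y hy ↦ ha (Algebra.norm K y) ?_
  have hx_int : IsIntegral K x := by
    by_contra h
    exact X_pow_sub_C_ne_zero hm.pos a (hx.symm.trans (minpoly.eq_zero h))
  rw [← map_pow, hy, ← adjoin.powerBasis_gen hx_int,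
    Algebra.PowerBasis.norm_gen_eq_coeff_zero_minpoly]
  simp [minpoly_gen, hx, hm.neg_one_pow, hm.pos.ne]

theorem isRoot_cyclotomic_nine_zmod_nineteen_four : (cyclotomic 9 (ZMod 19)).IsRoot 4 := by
  rw [show 9 = 3 ^ (1 + 1) by norm_num, cyclotomic_prime_pow_eq_geom_sum Nat.prime_three]
  simp only [Finset.sum_range_succ, Finset.range_one, Finset.sum_singleton, IsRoot.def,
    eval_add, eval_pow, eval_X]
  decide

theorem X_pow_eighteen_add_four_irreducible_over_ninth_cyclotomic
    (ζ : ℂ) (hζ : IsPrimitiveRoot ζ 9) :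
    Irreducible ((X : Polynomial ℚ⟮ζ⟯) ^ 18 + 4) := by
  -- The type ascription replaces the `ℚ`-algebra structure by the one instance search finds.
  have : IsCyclotomicExtension {9} ℚ ℚ⟮ζ⟯ := hζ.isCyclotomicExtension_adjoin ℚ
  have hζ' : IsPrimitiveRoot (AdjoinSimple.gen ℚ ζ) 9 :=
    hζ.of_map_of_injective (algebraMap ℚ⟮ζ⟯ ℂ).injective
  have not_pow (e : ℕ) (he : e ≠ 0) (h : ∀ x : ZMod 19, x ^ e ≠ -4) (b : ℚ⟮ζ⟯) : b ^ e ≠ -4 := by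
    intro hb
    obtain ⟨x, hx⟩ := hζ'.exists_pow_eq_of_isRoot_cyclotomic
      isRoot_cyclotomic_nine_zmod_nineteen_four he (a := -4) (by push_cast; exact hb)
    exact h x (by push_cast at hx; exact hx)
  rw [show (X : ℚ⟮ζ⟯[X]) ^ 18 + 4 = X ^ (2 * 3 ^ 2) - C (-4) by
    rw [map_neg, sub_neg_eq_add, map_ofNat]; norm_num]
  exact X_pow_two_mul_sub_C_irreducible_of_odd (by decide)
    (X_pow_sub_C_irreducible_of_prime_pow Nat.prime_three (by norm_num) 2
      (not_pow 3 (by norm_num) (by decide)))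
    (not_pow 2 (by norm_num) (by decide))
end

section
/- Let a₁, a₂, a₃, b, c, d, f ∈ ℂ satisfy the simplified system: d²(a₁ + b − c) = 1; a₃ + f = 0; a₁ + 2a₁a₂ − b + 2a₂b + c − 2a₂c = 0; (a₁ + b − c)⁴ = −4. Then the four equations (EqsW13) hold: −1 − (1/4)(a₁ + b − c)²(3a₁ + 4a₁a₂ − b + 4a₂b + c − 4a₂c)² = 0; −1 − (a₁ + b − c)·d·(a₃² − d + 2a₃f + f²) = 0; (a₁ + b − c)(a₃ + f)(a₃² − 2d + 2a₃f + f²) = 0; −2(a₁ + b − c)(a₁ + 2a₁a₂ − b + 2a₂b + c − 2a₂c) = 0. -/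
theorem W13_simplified_system_implies_EqsW13
    (a₁ a₂ a₃ b c d f : ℂ)
    (h1 : d ^ 2 * (a₁ + b - c) = 1)
    (h2 : a₃ + f = 0)
    (h3 : a₁ + 2 * a₁ * a₂ - b + 2 * a₂ * b + c - 2 * a₂ * c = 0)
    (h4 : (a₁ + b - c) ^ 4 = -4) :
    -1 - 1 / 4 * (a₁ + b - c) ^ 2
        * (3 * a₁ + 4 * a₁ * a₂ - b + 4 * a₂ * b + c - 4 * a₂ * c) ^ 2 = 0 ∧
    -1 - (a₁ + b - c) * d * (a₃ ^ 2 - d + 2 * a₃ * f + f ^ 2) = 0 ∧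
    (a₁ + b - c) * (a₃ + f) * (a₃ ^ 2 - 2 * d + 2 * a₃ * f + f ^ 2) = 0 ∧
    -2 * (a₁ + b - c) * (a₁ + 2 * a₁ * a₂ - b + 2 * a₂ * b + c - 2 * a₂ * c) = 0 := by
  refine ⟨?_, ?_, ?_, ?_⟩
  · linear_combination (-(a₁ + b - c)^2 * (a₁ + 2*a₁*a₂ - b + 2*a₂*b + c - 2*a₂*c)
      - (a₁ + b - c)^3) * h3 - (1/4) * h4
  · linear_combination h1 - (a₁ + b - c) * d * (a₃ + f) * h2
  · linear_combination (a₁ + b - c) * (a₃ ^ 2 - 2 * d + 2 * a₃ * f + f ^ 2) * h2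
  · linear_combination (-2 * (a₁ + b - c)) * h3
end
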